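/- Let P be a set of 2n points in regular wheel configuration, n ≥ 2, and suppose T_1, ..., T_n is a partition of the edges of the complete geometric graph on P into plane spanning trees such that T_1, ..., T_{n−1} are pairwise isomorphic double stars. Then T_n is also a double star isomorphic to each T_i. -/

import Mathlib

open scoped Real

namespace WheelCfg

/-- Vertex type of the wheel on `2n` points: `none` is the center,
`some i` is the `i`-th of the `2n-1` regularly spaced circle points. -/
abbrev WV (n : ℕ) := Option (Fin (2*n-1))

/-- Positions of the points of a regular wheel configuration with center `c`,
radius `R` and initial angle `θ`. -/
noncomputable def wpos (n : ℕ) (c : ℝ × ℝ) (R θ : ℝ) : WV n → ℝ × ℝ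
  | none => c
  | some i => (c.1 + R * Real.cos (θ + 2*π*i.val/(2*n-1)),
               c.2 + R * Real.sin (θ + 2*π*i.val/(2*n-1)))

/-- A radial edge: one endpoint is the center. -/
def Radial {n : ℕ} : WV n → WV n → Prop
  | none, _ => True
  | _, none => True
  | some _, some _ => False

/-- A boundary edge: joins two cyclically consecutive circle points. -/
def Boundary {n : ℕ} : WV n → WV n → Prop
  | some i, some j => (i.val + 1) % (2*n-1) = j.val ∨ (j.val + 1) % (2*n-1) = i.val
  | _, _ => False

/-- Non-crossing: distinct edges have disjoint open segments. -/
def NonCrossing {n : ℕ} (pos : WV n → ℝ × ℝ) (T : SimpleGraph (WV n)) : Prop :=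
  ∀ a b c d : WV n, T.Adj a b → T.Adj c d → s(a,b) ≠ s(c,d) →
    Disjoint (openSegment ℝ (pos a) (pos b)) (openSegment ℝ (pos c) (pos d))

/-- A plane spanning tree of the wheel configuration. -/
def PlaneSpanningTree {n : ℕ} (pos : WV n → ℝ × ℝ) (T : SimpleGraph (WV n)) : Prop :=
  T.IsTree ∧ NonCrossing pos T

/-- A partition of the edge set of the complete geometric graph into `n` graphs. -/
def IsPartition {n : ℕ} (T : Fin n → SimpleGraph (WV n)) : Prop :=
  ∀ a b : WV n, a ≠ b → ∃! i : Fin n, (T i).Adj a b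

/-- The cyclic successor of a circle point. -/
def nxt {m : ℕ} (k : Fin m) : Fin m := ⟨(k.val + 1) % m, Nat.mod_lt _ k.pos⟩

/-- The number of boundary edges of `T`. -/
noncomputable def boundaryCount {n : ℕ} (T : SimpleGraph (WV n)) : ℕ :=
  Set.ncard {k : Fin (2*n-1) | T.Adj (some k) (some (nxt k))}

/-- The number of radial edges of `T`. -/
noncomputable def radialCount {n : ℕ} (T : SimpleGraph (WV n)) : ℕ :=
  Set.ncard {k : Fin (2*n-1) | T.Adj none (some k)}

/-- The circle point with index `k` (mod `2n-1`). -/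
def cir (n : ℕ) (h : 0 < 2*n-1) (k : ℕ) : WV n := some ⟨k % (2*n-1), Nat.mod_lt _ h⟩

/-- Signed side of point `p` with respect to the oriented line through `u`, `v`. -/
def sideVal (u v p : ℝ × ℝ) : ℝ :=
  (v.1 - u.1) * (p.2 - u.2) - (v.2 - u.2) * (p.1 - u.1)

end WheelCfg
namespace GraphDefs

/-- Degree of a vertex, via `Set.ncard` (no decidability assumptions). -/
noncomputable def gdeg {V : Type*} (G : SimpleGraph V) (v : V) : ℕ := (G.neighborSet v).ncard

/-- A caterpillar: a tree having a path which contains all vertices of degree `≥ 2`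
(equivalently, removing all leaves yields a path). -/
def IsCaterpillar {V : Type*} (G : SimpleGraph V) : Prop :=
  G.IsTree ∧ ∃ (u v : V) (p : G.Walk u v), p.IsPath ∧ ∀ w, 2 ≤ gdeg G w → w ∈ p.support

/-- The graph obtained from `T` by deleting the edges of the path `u1 u2 u3 u4`. -/
def delP4 {V : Type*} (T : SimpleGraph V) (u1 u2 u3 u4 : V) : SimpleGraph V :=
  T.deleteEdges {s(u1,u2), s(u2,u3), s(u3,u4)}

/-- Witness for `P_4`-symmetry: in `T` minus the path edges, `u1` and `ua` are isolated,
the components of `u3` and `ub` are nontrivial, distinct, cover everything else, and there is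
a graph isomorphism between them sending `u3` to `ub`. -/
def P4SymWitness {V : Type*} (T : SimpleGraph V) (u1 u2 u3 u4 ua ub : V) : Prop :=
  (∀ w, ¬ (delP4 T u1 u2 u3 u4).Adj u1 w) ∧
  (∀ w, ¬ (delP4 T u1 u2 u3 u4).Adj ua w) ∧
  (∃ w, (delP4 T u1 u2 u3 u4).Adj u3 w) ∧
  (∃ w, (delP4 T u1 u2 u3 u4).Adj ub w) ∧
  (delP4 T u1 u2 u3 u4).connectedComponentMk u3 ≠ (delP4 T u1 u2 u3 u4).connectedComponentMk ub ∧
  (∀ v : V, v = u1 ∨ v = ua ∨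
      v ∈ ((delP4 T u1 u2 u3 u4).connectedComponentMk u3).supp ∨
      v ∈ ((delP4 T u1 u2 u3 u4).connectedComponentMk ub).supp) ∧
  ∃ φ : ((delP4 T u1 u2 u3 u4).induce ((delP4 T u1 u2 u3 u4).connectedComponentMk u3).supp) ≃g
        ((delP4 T u1 u2 u3 u4).induce ((delP4 T u1 u2 u3 u4).connectedComponentMk ub).supp),
    (φ ⟨u3, rfl⟩).1 = ub

/-- A `P_4`-symmetric tree, recording the 4-path: the case `i = 4` (Type-1) uses
isolated vertices `u1, u4` and components of `u3, u2`; the case `i = 2` (Type-2) uses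
isolated vertices `u1, u2` and components of `u3, u4`. -/
def IsP4SymmetricVia {V : Type*} (T : SimpleGraph V) (u1 u2 u3 u4 : V) : Prop :=
  u1 ≠ u2 ∧ u1 ≠ u3 ∧ u1 ≠ u4 ∧ u2 ≠ u3 ∧ u2 ≠ u4 ∧ u3 ≠ u4 ∧
  T.Adj u1 u2 ∧ T.Adj u2 u3 ∧ T.Adj u3 u4 ∧
  (P4SymWitness T u1 u2 u3 u4 u4 u2 ∨ P4SymWitness T u1 u2 u3 u4 u2 u4)

/-- A `w`-caterpillar: a `P_4`-symmetric tree `T` such that `T` or `T - u1` is a caterpillar. -/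
def IsWCaterpillar {V : Type*} (T : SimpleGraph V) : Prop :=
  T.IsTree ∧ ∃ u1 u2 u3 u4 : V, IsP4SymmetricVia T u1 u2 u3 u4 ∧
    (IsCaterpillar T ∨ IsCaterpillar (T.induce {v | v ≠ u1}))

/-- A double star: a tree with two adjacent vertices `v, w` such that every other
vertex is a leaf adjacent to `v` or `w`. -/
def IsDoubleStar {V : Type*} (G : SimpleGraph V) : Prop :=
  G.IsTree ∧ ∃ v w : V, v ≠ w ∧ G.Adj v w ∧
    ∀ u, u ≠ v → u ≠ w → gdeg G u = 1 ∧ (G.Adj v u ∨ G.Adj w u)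

/-- A symmetric tree: an edge `vw` such that the two components of `T - vw` admit a
graph isomorphism mapping `v` to `w`. -/
def IsSymmetricTree {V : Type*} (T : SimpleGraph V) : Prop :=
  T.IsTree ∧ ∃ v w : V, T.Adj v w ∧
    ∃ φ : ((T.deleteEdges {s(v,w)}).induce ((T.deleteEdges {s(v,w)}).connectedComponentMk v).supp) ≃g
          ((T.deleteEdges {s(v,w)}).induce ((T.deleteEdges {s(v,w)}).connectedComponentMk w).supp),
      (φ ⟨v, rfl⟩).1 = w

/-- `S_2(m, m)`: the double star `S(m,m)` with its central edge subdivided by two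
degree-2 vertices: centers `v, w` of degree `m+1`, subdivision path `v c1 c2 w`,
and all other vertices are leaves adjacent to `v` or `w`. -/
def IsS2DoubleStar {V : Type*} (G : SimpleGraph V) (m : ℕ) : Prop :=
  G.IsTree ∧ ∃ v c1 c2 w : V,
    v ≠ c1 ∧ v ≠ c2 ∧ v ≠ w ∧ c1 ≠ c2 ∧ c1 ≠ w ∧ c2 ≠ w ∧
    G.Adj v c1 ∧ G.Adj c1 c2 ∧ G.Adj c2 w ∧
    gdeg G v = m + 1 ∧ gdeg G w = m + 1 ∧ gdeg G c1 = 2 ∧ gdeg G c2 = 2 ∧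
    ∀ u, u ≠ v → u ≠ c1 → u ≠ c2 → u ≠ w → gdeg G u = 1 ∧ (G.Adj v u ∨ G.Adj w u)

end GraphDefs
set_option linter.unusedSectionVars false
set_option maxHeartbeats 1000000

section DSAux
open GraphDefs Finset

variable {V : Type*} [Fintype V] [DecidableEq V] {G G' : SimpleGraph V}

lemma gdeg_eq_card_filter (G : SimpleGraph V) [DecidableRel G.Adj] (v : V) :
    gdeg G v = #(univ.filter (fun u => G.Adj v u)) := by
  rw [gdeg, show G.neighborSet v = ↑(univ.filter (fun u => G.Adj v u)) by ext u; simp,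
    Set.ncard_coe_finset]

lemma gdeg_eq_degree (G : SimpleGraph V) [DecidableRel G.Adj] (v : V) :
    gdeg G v = G.degree v := by
  rw [gdeg_eq_card_filter, SimpleGraph.degree, SimpleGraph.neighborFinset_eq_filter]

lemma leaf_unique {u a b : V} (h : gdeg G u = 1) (ha : G.Adj u a) (hb : G.Adj u b) : a = b := by
  obtain ⟨c, hc⟩ := Set.ncard_eq_one.mp h
  have h1 : a ∈ G.neighborSet u := ha
  have h2 : b ∈ G.neighborSet u := hb
  rw [hc] at h1 h2
  simp only [Set.mem_singleton_iff] at h1 h2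
  rw [h1, h2]

lemma gdeg_pos (hconn : G.Connected) (hcard : 2 ≤ Fintype.card V) (v : V) : 1 ≤ gdeg G v := by
  obtain ⟨u, hu⟩ := Fintype.exists_ne_of_one_lt_card (by omega) v
  obtain ⟨p⟩ := hconn v u
  rw [Nat.one_le_iff_ne_zero, gdeg, Ne, Set.ncard_eq_zero (Set.toFinite _),
    ← Set.not_nonempty_iff_eq_empty, not_not]
  cases p with
  | nil => exact absurd rfl (Ne.symm hu)
  | cons h q => exact ⟨_, h⟩

lemma no_leaf_pair (hconn : G.Connected) {a b c : V} (hab : G.Adj a b)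
    (ha : gdeg G a = 1) (hb : gdeg G b = 1) (hca : c ≠ a) (hcb : c ≠ b) : False := by
  have closed : ∀ s t : V, G.Adj s t → (s = a ∨ s = b) → (t = a ∨ t = b) := by
    rintro s t hst (rfl | rfl)
    · exact Or.inr (leaf_unique ha hst hab)
    · exact Or.inl (leaf_unique hb hst hab.symm)
  have reach : ∀ (s t : V) (p : G.Walk s t), (s = a ∨ s = b) → (t = a ∨ t = b) := by
    intro s t p
    induction p with
    | nil => exact id
    | cons h q ih => intro hs; exact ih (closed _ _ h hs)
  obtain ⟨p⟩ := hconn a c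
  rcases reach a c p (Or.inl rfl) with h | h
  · exact hca h
  · exact hcb h

/-- Double-star witness structure. -/
def DSW (G : SimpleGraph V) (x y : V) : Prop :=
  x ≠ y ∧ G.Adj x y ∧ ∀ u, u ≠ x → u ≠ y → gdeg G u = 1 ∧ (G.Adj x u ∨ G.Adj y u)

variable {x y x' y' : V}

lemma DSW.not_both (h : DSW G x y) {u : V} (hux : u ≠ x) (huy : u ≠ y)
    (h1 : G.Adj x u) (h2 : G.Adj y u) : False :=
  h.1 (leaf_unique (h.2.2 u hux huy).1 h1.symm h2.symm)

lemma DSW.symm (h : DSW G x y) : DSW G y x :=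
  ⟨h.1.symm, h.2.1.symm, fun u hy hx => ⟨(h.2.2 u hx hy).1, (h.2.2 u hx hy).2.symm⟩⟩

/-- The leaves hanging on `x`. -/
def LX (G : SimpleGraph V) (x y : V) : Set V := {u | G.Adj x u ∧ u ≠ y}

lemma DSW.nbr_x (h : DSW G x y) : G.neighborSet x = insert y (LX G x y) := by
  ext u
  constructor
  · intro hu
    rcases eq_or_ne u y with rfl | hne
    · exact Set.mem_insert _ _
    · exact Set.mem_insert_of_mem _ ⟨hu, hne⟩
  · rintro (rfl | ⟨ha, _⟩)
    · exact h.2.1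
    · exact ha

lemma DSW.card_LX (h : DSW G x y) : gdeg G x = (LX G x y).ncard + 1 := by
  rw [gdeg, h.nbr_x, Set.ncard_insert_of_notMem (fun hy => hy.2 rfl) (Set.toFinite _)]

lemma DSW.adj_iff (h : DSW G x y) {a b : V} :
    G.Adj a b ↔ ((a = x ∧ b = y) ∨ (a = y ∧ b = x) ∨ (a = x ∧ b ∈ LX G x y) ∨
      (b = x ∧ a ∈ LX G x y) ∨ (a = y ∧ b ∈ LX G y x) ∨ (b = y ∧ a ∈ LX G y x)) := by
  constructor
  · intro hab
    rcases eq_or_ne a x with rfl | hax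
    · rcases eq_or_ne b y with rfl | hby
      · exact Or.inl ⟨rfl, rfl⟩
      · exact Or.inr (Or.inr (Or.inl ⟨rfl, hab, hby⟩))
    · rcases eq_or_ne a y with rfl | hay
      · rcases eq_or_ne b x with rfl | hbx
        · exact Or.inr (Or.inl ⟨rfl, rfl⟩)
        · exact Or.inr (Or.inr (Or.inr (Or.inr (Or.inl ⟨rfl, hab, hbx⟩))))
      · have hleaf := h.2.2 a hax hay
        rcases hleaf.2 with hxa | hya
        · have : b = x := leaf_unique hleaf.1 hab hxa.symm
          exact Or.inr (Or.inr (Or.inr (Or.inl ⟨this, hxa, hay⟩)))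
        · have : b = y := leaf_unique hleaf.1 hab hya.symm
          exact Or.inr (Or.inr (Or.inr (Or.inr (Or.inr ⟨this, hya, hax⟩))))
  · rintro (⟨rfl, rfl⟩ | ⟨rfl, rfl⟩ | ⟨rfl, hb, _⟩ | ⟨rfl, ha, _⟩ | ⟨rfl, hb, _⟩ | ⟨rfl, ha, _⟩)
    · exact h.2.1
    · exact h.2.1.symm
    · exact hb
    · exact ha.symm
    · exact hb
    · exact ha.symm

/-- The map between two double stars. -/
noncomputable def dsMap [DecidableRel G.Adj] (h : DSW G x y) (x' y' : V)
    (e1 : ↥(LX G x y) ≃ ↥(LX G' x' y')) (e2 : ↥(LX G y x) ≃ ↥(LX G' y' x')) : V → V :=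
  fun u =>
    if h1 : u = x then x'
    else if h2 : u = y then y'
    else if h3 : G.Adj x u then ↑(e1 ⟨u, h3, h2⟩)
    else ↑(e2 ⟨u, (h.2.2 u h1 h2).2.resolve_left h3, h1⟩)

section maps
variable [DecidableRel G.Adj] (h : DSW G x y)
  (e1 : ↥(LX G x y) ≃ ↥(LX G' x' y')) (e2 : ↥(LX G y x) ≃ ↥(LX G' y' x'))

lemma dsMap_x : dsMap h x' y' e1 e2 x = x' := dif_pos rfl

lemma dsMap_y : dsMap h x' y' e1 e2 y = y' := by
  rw [dsMap, dif_neg (Ne.symm h.1), dif_pos rfl]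

lemma dsMap_LX {u : V} (hu : u ∈ LX G x y) :
    dsMap h x' y' e1 e2 u = ↑(e1 ⟨u, hu⟩) := by
  rw [dsMap, dif_neg hu.1.ne', dif_neg hu.2, dif_pos hu.1]

lemma dsMap_LY {u : V} (hu : u ∈ LX G y x) :
    dsMap h x' y' e1 e2 u = ↑(e2 ⟨u, hu⟩) := by
  have h1 : u ≠ x := hu.2
  have h2 : u ≠ y := hu.1.ne'
  have h3 : ¬ G.Adj x u := fun hx => h.not_both h1 h2 hx hu.1
  rw [dsMap, dif_neg h1, dif_neg h2, dif_neg h3]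

end maps

lemma dsMap_adj [DecidableRel G.Adj] (h : DSW G x y) (h' : DSW G' x' y')
    (e1 : ↥(LX G x y) ≃ ↥(LX G' x' y')) (e2 : ↥(LX G y x) ≃ ↥(LX G' y' x'))
    {a b : V} (hab : G.Adj a b) :
    G'.Adj (dsMap h x' y' e1 e2 a) (dsMap h x' y' e1 e2 b) := by
  have hx := dsMap_x (G' := G') h (x' := x') (y' := y') e1 e2
  have hy := dsMap_y (G' := G') h (x' := x') (y' := y') e1 e2
  rcases h.adj_iff.mp hab with ⟨rfl, rfl⟩ | ⟨rfl, rfl⟩ | ⟨rfl, hb⟩ | ⟨rfl, ha⟩ | ⟨rfl, hb⟩ | ⟨rfl, ha⟩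
  · rw [hx, hy]; exact h'.2.1
  · rw [hx, hy]; exact h'.2.1.symm
  · rw [hx, dsMap_LX h e1 e2 hb]; exact (e1 ⟨_, hb⟩).2.1
  · rw [hx, dsMap_LX h e1 e2 ha]; exact ((e1 ⟨_, ha⟩).2.1).symm
  · rw [hy, dsMap_LY h e1 e2 hb]; exact (e2 ⟨_, hb⟩).2.1
  · rw [hy, dsMap_LY h e1 e2 ha]; exact ((e2 ⟨_, ha⟩).2.1).symm

lemma dsMap_leftInv [DecidableRel G.Adj] [DecidableRel G'.Adj]
    (h : DSW G x y) (h' : DSW G' x' y')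
    (e1 : ↥(LX G x y) ≃ ↥(LX G' x' y')) (e2 : ↥(LX G y x) ≃ ↥(LX G' y' x')) :
    Function.LeftInverse (dsMap h' x y e1.symm e2.symm) (dsMap h x' y' e1 e2) := by
  intro u
  by_cases h1 : u = x
  · subst h1; rw [dsMap_x, dsMap_x]
  · by_cases h2 : u = y
    · subst h2; rw [dsMap_y, dsMap_y]
    · by_cases h3 : G.Adj x u
      · have hu : u ∈ LX G x y := ⟨h3, h2⟩
        rw [dsMap_LX h e1 e2 hu, dsMap_LX h' e1.symm e2.symm (e1 ⟨u, hu⟩).2]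
        simp
      · have hu : u ∈ LX G y x := ⟨(h.2.2 u h1 h2).2.resolve_left h3, h1⟩
        rw [dsMap_LY h e1 e2 hu, dsMap_LY h' e1.symm e2.symm (e2 ⟨u, hu⟩).2]
        simp

lemma set_equiv_of_ncard_eq {s t : Set V} (h : s.ncard = t.ncard) : Nonempty (↥s ≃ ↥t) := by
  haveI := s.toFinite.fintype
  haveI := t.toFinite.fintype
  refine ⟨Fintype.equivOfCardEq ?_⟩
  rwa [← Nat.card_coe_set_eq, ← Nat.card_coe_set_eq, Nat.card_eq_fintype_card,
    Nat.card_eq_fintype_card] at h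

lemma ds_iso {G G' : SimpleGraph V} {x y x' y' : V}
    (h : DSW G x y) (h' : DSW G' x' y')
    (hxx : gdeg G x = gdeg G' x') (hyy : gdeg G y = gdeg G' y') :
    Nonempty (G ≃g G') := by
  classical
  obtain ⟨e1⟩ : Nonempty (↥(LX G x y) ≃ ↥(LX G' x' y')) := by
    apply set_equiv_of_ncard_eq
    have a1 := h.card_LX; have a2 := h'.card_LX; omega
  obtain ⟨e2⟩ : Nonempty (↥(LX G y x) ≃ ↥(LX G' y' x')) := by
    apply set_equiv_of_ncard_eq
    have a1 := h.symm.card_LX; have a2 := h'.symm.card_LX; omega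
  refine ⟨⟨⟨dsMap h x' y' e1 e2, dsMap h' x y e1.symm e2.symm,
    dsMap_leftInv h h' e1 e2, ?_⟩, ?_⟩⟩
  · have := dsMap_leftInv h' h e1.symm e2.symm
    exact this
  · intro a b
    simp only [Equiv.coe_fn_mk]
    constructor
    · intro hadj
      have := dsMap_adj h' h e1.symm e2.symm hadj
      rwa [dsMap_leftInv h h' e1 e2 a, dsMap_leftInv h h' e1 e2 b] at this
    · exact dsMap_adj h h' e1 e2

end DSAux
open WheelCfg GraphDefs in
/-- If in a partition of the complete geometric graph on a regular wheel configuration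
into plane spanning trees the trees `T_1, …, T_{n-1}` are pairwise isomorphic double
stars, then the last tree `T_n` is also a double star isomorphic to each of them. -/
theorem stmt16 (n : ℕ) (hn : 2 ≤ n) (c : ℝ × ℝ) (R θ : ℝ) (hR : 0 < R)
    (T : Fin n → SimpleGraph (WV n)) (hpart : IsPartition T)
    (hplane : ∀ i, PlaneSpanningTree (wpos n c R θ) (T i))
    (hds : ∀ i : Fin n, i.val < n - 1 → IsDoubleStar (T i))
    (hiso : ∀ i j : Fin n, i.val < n - 1 → j.val < n - 1 → Nonempty (T i ≃g T j)) :
    IsDoubleStar (T ⟨n - 1, by omega⟩) ∧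
    ∀ i : Fin n, i.val < n - 1 → Nonempty (T ⟨n - 1, by omega⟩ ≃g T i) := by
  classical
  have hcardV : Fintype.card (WV n) = 2 * n := by
    simp only [WV, Fintype.card_option, Fintype.card_fin]
    omega
  have hlastlt : n - 1 < n := by omega
  set last : Fin n := ⟨n - 1, hlastlt⟩ with hlast
  have hlast_iff : ∀ i : Fin n, i ≠ last ↔ i.val < n - 1 := by
    intro i
    rw [Ne, Fin.ext_iff]
    have := i.isLt
    simp only [hlast]
    omega
  -- Lemma A: each vertex has total degree 2n-1 over the partition
  have keyA : ∀ x : WV n, ∑ i : Fin n, gdeg (T i) x = 2 * n - 1 := by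
    intro x
    have hdisj : ∀ i ∈ (Finset.univ : Finset (Fin n)), ∀ j ∈ Finset.univ, i ≠ j →
        Disjoint (Finset.univ.filter (fun u => (T i).Adj x u))
          (Finset.univ.filter (fun u => (T j).Adj x u)) := by
      intro i _ j _ hij
      rw [Finset.disjoint_left]
      intro u hui huj
      rw [Finset.mem_filter] at hui huj
      obtain ⟨k, -, huniq⟩ := hpart x u hui.2.ne
      exact hij ((huniq i hui.2).trans (huniq j huj.2).symm)
    have hcup : Finset.univ.biUnion
          (fun i : Fin n => Finset.univ.filter fun u => (T i).Adj x u)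
        = Finset.univ.erase x := by
      ext u
      simp only [Finset.mem_biUnion, Finset.mem_filter, Finset.mem_erase, Finset.mem_univ,
        true_and, and_true]
      constructor
      · rintro ⟨i, hi⟩
        exact hi.ne'
      · intro hu
        obtain ⟨i, hi, -⟩ := hpart x u (Ne.symm hu)
        exact ⟨i, hi⟩
    calc ∑ i : Fin n, gdeg (T i) x
        = ∑ i : Fin n, (Finset.univ.filter (fun u => (T i).Adj x u)).card :=
          Finset.sum_congr rfl (fun i _ => gdeg_eq_card_filter _ _)
      _ = (Finset.univ.biUnion
            (fun i : Fin n => Finset.univ.filter fun u => (T i).Adj x u)).card :=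
          (Finset.card_biUnion hdisj).symm
      _ = (Finset.univ.erase x).card := by rw [hcup]
      _ = 2 * n - 1 := by
          rw [Finset.card_erase_of_mem (Finset.mem_univ x), Finset.card_univ, hcardV]
  -- Lemma B: each tree has degree sum 2(2n-1)
  have keyB : ∀ i : Fin n, ∑ x : WV n, gdeg (T i) x = 2 * (2 * n - 1) := by
    intro i
    have h1 : ∑ x : WV n, gdeg (T i) x = ∑ x : WV n, (T i).degree x :=
      Finset.sum_congr rfl (fun x _ => gdeg_eq_degree _ x)
    have h2 := SimpleGraph.sum_degrees_eq_twice_card_edges (T i)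
    have h3 := (hplane i).1.card_edgeFinset
    rw [hcardV] at h3
    omega
  -- choose double-star witnesses
  have H : ∀ i : Fin n, i.val < n - 1 → ∃ v w : WV n, v ≠ w ∧ (T i).Adj v w ∧
      ∀ u, u ≠ v → u ≠ w → gdeg (T i) u = 1 ∧ ((T i).Adj v u ∨ (T i).Adj w u) :=
    fun i hi => (hds i hi).2
  choose! v w hvw hTadj hTleaf using H
  set S : Finset (WV n) :=
    Finset.univ.filter (fun x => ∀ i : Fin n, i.val < n - 1 → x ≠ v i ∧ x ≠ w i) with hSdef
  have hmemS : ∀ x : WV n,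
      x ∈ S ↔ ∀ i : Fin n, i.val < n - 1 → x ≠ v i ∧ x ≠ w i := by
    intro x; simp [hSdef]
  -- vertices not covered by witnesses have degree n in the last tree
  have hdegS : ∀ x ∈ S, gdeg (T last) x = n := by
    intro x hx
    have hsplit : gdeg (T last) x + ∑ i ∈ Finset.univ.erase last, gdeg (T i) x
        = ∑ i : Fin n, gdeg (T i) x :=
      Finset.add_sum_erase _ (fun i => gdeg (T i) x) (Finset.mem_univ last)
    have hones : ∀ i ∈ Finset.univ.erase last, gdeg (T i) x = 1 := by
      intro i hi
      have hi' : i.val < n - 1 := (hlast_iff i).mp (Finset.mem_erase.mp hi).1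
      have hx' := (hmemS x).mp hx i hi'
      exact (hTleaf i hi' x hx'.1 hx'.2).1
    have h2 : ∑ i ∈ Finset.univ.erase last, gdeg (T i) x = n - 1 := by
      rw [Finset.sum_congr rfl hones, Finset.sum_const, smul_eq_mul, mul_one,
        Finset.card_erase_of_mem (Finset.mem_univ last), Finset.card_univ,
        Fintype.card_fin]
    have hka := keyA x
    omega
  -- witnesses as an image of a small type
  set f : Fin (n - 1) × Bool → WV n :=
    fun p => if p.2 then v ⟨p.1.val, by have := p.1.isLt; omega⟩
      else w ⟨p.1.val, by have := p.1.isLt; omega⟩ with hfdef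
  have hfeq : ∀ (i : Fin n) (hi : i.val < n - 1),
      f (⟨i.val, hi⟩, true) = v i ∧ f (⟨i.val, hi⟩, false) = w i := by
    intro i hi
    constructor
    · rw [hfdef]
      simp
    · rw [hfdef]
      simp
  have himage : Finset.univ \ S = Finset.univ.image f := by
    ext u
    constructor
    · intro hu
      have hnot : ¬ ∀ i : Fin n, i.val < n - 1 → u ≠ v i ∧ u ≠ w i := by
        intro hcon
        exact (Finset.mem_sdiff.mp hu).2 ((hmemS u).mpr hcon)
      push_neg at hnot
      obtain ⟨i, hi, hvwc⟩ := hnot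
      by_cases hcase : u = v i
      · exact Finset.mem_image.mpr ⟨(⟨i.val, hi⟩, true), Finset.mem_univ _,
          ((hfeq i hi).1).trans hcase.symm⟩
      · exact Finset.mem_image.mpr ⟨(⟨i.val, hi⟩, false), Finset.mem_univ _,
          ((hfeq i hi).2).trans (hvwc hcase).symm⟩
    · intro hu
      obtain ⟨p, -, rfl⟩ := Finset.mem_image.mp hu
      rw [Finset.mem_sdiff]
      refine ⟨Finset.mem_univ _, fun hS => ?_⟩
      have hi : ((⟨p.1.val, by have := p.1.isLt; omega⟩ : Fin n)).val < n - 1 := p.1.isLt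
      have := (hmemS _).mp hS _ hi
      rcases p with ⟨k, b⟩
      cases b
      · exact this.2 (by simp [hfdef])
      · exact this.1 (by simp [hfdef])
  have hcard_dom : Fintype.card (Fin (n - 1) × Bool) = 2 * (n - 1) := by
    simp only [Fintype.card_prod, Fintype.card_fin, Fintype.card_bool]
    omega
  have hS_le_univ : S.card ≤ 2 * n := by
    have := Finset.card_le_card (Finset.subset_univ S)
    rwa [Finset.card_univ, hcardV] at this
  have hS_card_sum : S.card + (Finset.univ \ S).card = 2 * n := by
    rw [Finset.card_sdiff_of_subset (Finset.subset_univ S), Finset.card_univ, hcardV]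
    omega
  have hSc_le : (Finset.univ \ S).card ≤ 2 * (n - 1) := by
    rw [himage]
    exact le_trans Finset.card_image_le (by rw [Finset.card_univ, hcard_dom])
  have hS2 : 2 ≤ S.card := by omega
  -- degree-sum bounds force S.card = 2
  have hconn_last : (T last).Connected := (hplane last).1.isConnected
  have hdeg1 : ∀ x : WV n, 1 ≤ gdeg (T last) x :=
    gdeg_pos hconn_last (by rw [hcardV]; omega)
  have hsum_split : ∑ x ∈ Finset.univ \ S, gdeg (T last) x + ∑ x ∈ S, gdeg (T last) x
      = ∑ x : WV n, gdeg (T last) x := Finset.sum_sdiff (Finset.subset_univ S)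
  have hsum_S : ∑ x ∈ S, gdeg (T last) x = S.card * n := by
    rw [Finset.sum_congr rfl hdegS, Finset.sum_const, smul_eq_mul]
  have hsum_rest_ge : (Finset.univ \ S).card ≤ ∑ x ∈ Finset.univ \ S, gdeg (T last) x := by
    calc (Finset.univ \ S).card = ∑ _x ∈ Finset.univ \ S, 1 := by
          rw [Finset.sum_const, smul_eq_mul, mul_one]
      _ ≤ _ := Finset.sum_le_sum (fun x _ => hdeg1 x)
  have hKB : ∑ x : WV n, gdeg (T last) x + 2 = 4 * n := by
    have := keyB last; omega
  have hSle2 : S.card ≤ 2 := by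
    by_contra hc
    push_neg at hc
    have hq : S.card * n + (Finset.univ \ S).card + 2 ≤ 4 * n := by
      obtain ⟨P, hP⟩ : ∃ P, S.card * n = P := ⟨_, rfl⟩
      rw [hP] at hsum_S ⊢
      omega
    nlinarith [hq, hS_card_sum, hc, hn]
  have hS_card : S.card = 2 := le_antisymm hSle2 hS2
  -- all non-S vertices are leaves of the last tree
  have hrest_sum : ∑ x ∈ Finset.univ \ S, gdeg (T last) x = (Finset.univ \ S).card := by
    have hP : S.card * n = 2 * n := by rw [hS_card]
    rw [hP] at hsum_S
    omega
  have hrest1 : ∀ x ∈ Finset.univ \ S, gdeg (T last) x = 1 := by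
    intro x hx
    by_contra hne
    have hlt : ∑ y ∈ Finset.univ \ S, 1 < ∑ y ∈ Finset.univ \ S, gdeg (T last) y :=
      Finset.sum_lt_sum (fun y _ => hdeg1 y) ⟨x, hx, by have := hdeg1 x; omega⟩
    rw [Finset.sum_const, smul_eq_mul, mul_one] at hlt
    omega
  obtain ⟨x, y, hxy, hSxy⟩ := Finset.card_eq_two.mp hS_card
  have hxS : x ∈ S := by rw [hSxy]; exact Finset.mem_insert_self _ _
  have hyS : y ∈ S := by rw [hSxy]; simp
  have hdegx : gdeg (T last) x = n := hdegS x hxS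
  have hdegy : gdeg (T last) y = n := hdegS y hyS
  have hnotS : ∀ u : WV n, u ≠ x → u ≠ y → u ∈ Finset.univ \ S := by
    intro u h1 h2
    rw [Finset.mem_sdiff]
    refine ⟨Finset.mem_univ _, ?_⟩
    rw [hSxy]; simp [h1, h2]
  -- the two hubs are adjacent
  have hadjxy : (T last).Adj x y := by
    by_contra hnadj
    have hdisjN : Disjoint ((T last).neighborSet x) ((T last).neighborSet y) := by
      rw [Set.disjoint_left]
      intro u hux huy
      have h1 : u ≠ x := hux.ne'
      have h2 : u ≠ y := huy.ne'
      have hu1 : gdeg (T last) u = 1 := hrest1 u (hnotS u h1 h2)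
      exact hxy (leaf_unique hu1 hux.symm huy.symm)
    have hsub : (T last).neighborSet x ∪ (T last).neighborSet y ⊆ ({x, y} : Set (WV n))ᶜ := by
      intro u hu
      simp only [Set.mem_compl_iff, Set.mem_insert_iff, Set.mem_singleton_iff]
      push_neg
      rcases hu with hux | huy
      · exact ⟨hux.ne', fun h => hnadj (h ▸ hux)⟩
      · exact ⟨fun h => hnadj (h ▸ huy).symm, huy.ne'⟩
    have hcard_union :
        ((T last).neighborSet x ∪ (T last).neighborSet y).ncard = 2 * n := by
      rw [Set.ncard_union_eq hdisjN (Set.toFinite _) (Set.toFinite _)]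
      have e1 : ((T last).neighborSet x).ncard = n := hdegx
      have e2 : ((T last).neighborSet y).ncard = n := hdegy
      omega
    have hcard_compl : (({x, y} : Set (WV n))ᶜ).ncard = 2 * n - 2 := by
      have h1 : ({x, y} : Set (WV n)).ncard = 2 := Set.ncard_pair hxy
      have h2 := Set.ncard_add_ncard_compl ({x, y} : Set (WV n))
        (Set.toFinite _) (Set.toFinite _)
      rw [h1, Nat.card_eq_fintype_card, hcardV] at h2
      omega
    have hle := Set.ncard_le_ncard hsub (Set.toFinite _)
    omega
  -- the leaf structure of the last tree
  have hleafP : ∀ u : WV n, u ≠ x → u ≠ y →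
      gdeg (T last) u = 1 ∧ ((T last).Adj x u ∨ (T last).Adj y u) := by
    intro u hux huy
    have hu1 : gdeg (T last) u = 1 := hrest1 u (hnotS u hux huy)
    refine ⟨hu1, ?_⟩
    obtain ⟨z, hz⟩ := Set.ncard_eq_one.mp hu1
    have hadj_uz : (T last).Adj u z := by
      have : z ∈ (T last).neighborSet u := by rw [hz]; exact rfl
      exact this
    rcases eq_or_ne z x with rfl | hzx
    · exact Or.inl hadj_uz.symm
    rcases eq_or_ne z y with rfl | hzy
    · exact Or.inr hadj_uz.symm
    exfalso
    have hz1 : gdeg (T last) z = 1 := hrest1 z (hnotS z hzx hzy)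
    exact no_leaf_pair hconn_last hadj_uz hu1 hz1 (c := x) (Ne.symm hux) (Ne.symm hzx)
  have hDSW_last : DSW (T last) x y := ⟨hxy, hadjxy, hleafP⟩
  -- injectivity of the witness map
  have hinj : Set.InjOn f ↑(Finset.univ : Finset (Fin (n - 1) × Bool)) := by
    apply Finset.injOn_of_card_image_eq
    rw [← himage, Finset.card_univ, hcard_dom]
    omega
  have hwit_ne : ∀ i j : Fin n, i.val < n - 1 → j.val < n - 1 →
      ((i ≠ j → v i ≠ v j ∧ w i ≠ w j) ∧ v i ≠ w j) := by
    intro i j hi hj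
    have h1 := (hfeq i hi).1
    have h2 := (hfeq i hi).2
    have h3 := (hfeq j hj).1
    have h4 := (hfeq j hj).2
    have hinj' : ∀ p q : Fin (n - 1) × Bool, f p = f q → p = q := by
      intro p q hpq
      exact hinj (Finset.mem_coe.mpr (Finset.mem_univ p))
        (Finset.mem_coe.mpr (Finset.mem_univ q)) hpq
    constructor
    · intro hij
      constructor
      · intro hcon
        have := hinj' _ _ (h1.trans (hcon.trans h3.symm))
        apply hij
        apply Fin.ext
        simpa [Fin.ext_iff] using congrArg (fun p => (p.1 : Fin (n-1)).val) this
      · intro hcon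
        have := hinj' _ _ (h2.trans (hcon.trans h4.symm))
        apply hij
        apply Fin.ext
        simpa [Fin.ext_iff] using congrArg (fun p => (p.1 : Fin (n-1)).val) this
    · intro hcon
      have := hinj' _ _ (h1.trans (hcon.trans h4.symm))
      simpa using congrArg Prod.snd this
  -- witness degrees are n
  have hwit_deg : ∀ (i : Fin n), i.val < n - 1 → ∀ (z : WV n), (z = v i ∨ z = w i) →
      gdeg (T i) z = n := by
    intro i hi z hz
    have hz_notS : z ∉ S := by
      intro hzS
      obtain ⟨h1, h2⟩ := (hmemS z).mp hzS i hi
      rcases hz with rfl | rfl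
      exacts [h1 rfl, h2 rfl]
    have hz_last : gdeg (T last) z = 1 :=
      hrest1 z (Finset.mem_sdiff.mpr ⟨Finset.mem_univ _, hz_notS⟩)
    have hi_ne_last : i ≠ last := (hlast_iff i).mpr hi
    have hz_others : ∀ j ∈ (Finset.univ.erase last).erase i, gdeg (T j) z = 1 := by
      intro j hj
      obtain ⟨hji, hj'⟩ := Finset.mem_erase.mp hj
      have hjl : j.val < n - 1 := (hlast_iff j).mp (Finset.mem_erase.mp hj').1
      have hzz : z ≠ v j ∧ z ≠ w j := by
        rcases hz with rfl | rfl
        · exact ⟨((hwit_ne i j hi hjl).1 (Ne.symm hji)).1, (hwit_ne i j hi hjl).2⟩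
        · exact ⟨fun hcon => (hwit_ne j i hjl hi).2 hcon.symm,
            ((hwit_ne i j hi hjl).1 (Ne.symm hji)).2⟩
      exact (hTleaf j hjl z hzz.1 hzz.2).1
    have hsp1 : gdeg (T last) z + ∑ j ∈ Finset.univ.erase last, gdeg (T j) z
        = ∑ j : Fin n, gdeg (T j) z :=
      Finset.add_sum_erase _ (fun j => gdeg (T j) z) (Finset.mem_univ last)
    have hsp2 : gdeg (T i) z + ∑ j ∈ (Finset.univ.erase last).erase i, gdeg (T j) z
        = ∑ j ∈ Finset.univ.erase last, gdeg (T j) z :=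
      Finset.add_sum_erase _ (fun j => gdeg (T j) z)
        (Finset.mem_erase.mpr ⟨hi_ne_last, Finset.mem_univ i⟩)
    rw [Finset.sum_congr rfl hz_others, Finset.sum_const, smul_eq_mul, mul_one] at hsp2
    have hcard2 : ((Finset.univ.erase last).erase i).card = n - 2 := by
      rw [Finset.card_erase_of_mem (Finset.mem_erase.mpr ⟨hi_ne_last, Finset.mem_univ i⟩),
        Finset.card_erase_of_mem (Finset.mem_univ last), Finset.card_univ, Fintype.card_fin]
      omega
    have hKA := keyA z
    rw [hcard2] at hsp2
    omega
  refine ⟨⟨(hplane last).1, x, y, hxy, hadjxy, hleafP⟩, ?_⟩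
  intro i hi
  have hDSW_i : DSW (T i) (v i) (w i) := ⟨hvw i hi, hTadj i hi, hTleaf i hi⟩
  exact ds_iso hDSW_last hDSW_i
    (hdegx.trans (hwit_deg i hi (v i) (Or.inl rfl)).symm)
    (hdegy.trans (hwit_deg i hi (w i) (Or.inr rfl)).symm)
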